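/- arXiv:2405.15415 — 4 statements merged into one kernel-verified Lean document; each statement's English description precedes it below -/
import Mathlib

section
/- The CPPI loss is an unbiased estimate of the population loss: for every θ, E[L^CP(θ)] = L(θ), where L^CP(θ) = (1/(KN))∑_{k=1}^K ∑_{i=1}^N ℓ_θ(X̃_i, f^{(k)}(X̃_i)) − (1/n)∑_{k=1}^K ∑_{i∈D^{(k)}} ℓ_θ(X_i, f^{(k)}(X_i)) + (1/n)∑_{i=1}^n ℓ_θ(X_i, Y_i). -/
/-!
Each summand of the CPPI loss is a fixed function of a pair of random elements whose joint law is
known: `(X i, Y i)` has law `P`, while `(W k, X̃ j)` and, for `i` in fold `k`, `(W k, X i)` both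
have law `law(W k) ⊗ P_X`. Hence the `N` unlabeled terms and the `n / K` in-fold labeled terms of
model `k` have the same expectation, the two model terms cancel after the normalisations
`1 / (K N)` and `1 / n`, and only the mean of the `n` labeled losses remains.
-/

open MeasureTheory Finset

namespace MeasureTheory.MeasurePreserving

variable {Ω α E : Type*} [MeasurableSpace Ω] [MeasurableSpace α] [NormedAddCommGroup E]
  {μ : Measure Ω} {ν : Measure α}

theorem integrable_finsetSum_comp {ι : Type*} {s : Finset ι} {T : ι → Ω → α} {g : α → E}
    (hT : ∀ i ∈ s, MeasurePreserving (T i) μ ν) (hg : Integrable g ν) :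
    Integrable (fun ω => ∑ i ∈ s, g (T i ω)) μ :=
  integrable_finsetSum s fun i hi => (hT i hi).integrable_comp_of_integrable hg

theorem integrable_finsetSum_finsetSum_comp {κ ι : Type*} {t : Finset κ} {s : κ → Finset ι}
    {ν : κ → Measure α} {T : κ → ι → Ω → α} {g : α → E}
    (hT : ∀ k ∈ t, ∀ i ∈ s k, MeasurePreserving (T k i) μ (ν k))
    (hg : ∀ k ∈ t, Integrable g (ν k)) :
    Integrable (fun ω => ∑ k ∈ t, ∑ i ∈ s k, g (T k i ω)) μ :=
  integrable_finsetSum t fun k hk => integrable_finsetSum_comp (hT k hk) (hg k hk)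

variable [NormedSpace ℝ E]

theorem integral_comp_of_aestronglyMeasurable {T : Ω → α} (hT : MeasurePreserving T μ ν)
    {g : α → E} (hg : AEStronglyMeasurable g ν) : ∫ ω, g (T ω) ∂μ = ∫ a, g a ∂ν := by
  rw [← hT.map_eq] at hg ⊢
  exact (integral_map hT.measurable.aemeasurable hg).symm

theorem integral_finsetSum_comp {ι : Type*} {s : Finset ι} {T : ι → Ω → α} {g : α → E}
    (hT : ∀ i ∈ s, MeasurePreserving (T i) μ ν)
    (hg : Integrable g ν) : ∫ ω, ∑ i ∈ s, g (T i ω) ∂μ = #s • ∫ a, g a ∂ν := by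
  have hint : ∀ i ∈ s, Integrable (fun ω => g (T i ω)) μ := fun i hi =>
    (hT i hi).integrable_comp_of_integrable hg
  rw [integral_finsetSum s hint,
    sum_congr rfl fun i hi => (hT i hi).integral_comp_of_aestronglyMeasurable hg.1,
    sum_const]

theorem integral_finsetSum_finsetSum_comp {κ ι : Type*} {t : Finset κ} {s : κ → Finset ι}
    {ν : κ → Measure α} {T : κ → ι → Ω → α} {g : α → E}
    (hT : ∀ k ∈ t, ∀ i ∈ s k, MeasurePreserving (T k i) μ (ν k))
    (hg : ∀ k ∈ t, Integrable g (ν k)) :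
    ∫ ω, ∑ k ∈ t, ∑ i ∈ s k, g (T k i ω) ∂μ = ∑ k ∈ t, #(s k) • ∫ a, g a ∂ν k := by
  rw [integral_finsetSum t fun k hk => integrable_finsetSum_comp (hT k hk) (hg k hk)]
  exact sum_congr rfl fun k hk => integral_finsetSum_comp (hT k hk) (hg k hk)

end MeasureTheory.MeasurePreserving

theorem cppi_unbiased_general
    {Ω 𝒳 𝒴 𝕎 Θ : Type*} [MeasurableSpace Ω] [MeasurableSpace 𝒳] [MeasurableSpace 𝒴]
    [MeasurableSpace 𝕎]
    (μ : Measure Ω) [IsProbabilityMeasure μ]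
    (P : Measure (𝒳 × 𝒴)) [IsProbabilityMeasure P]
    (n N K : ℕ) (hn : 0 < n) (hN : 0 < N) (hK : 0 < K) (hKn : K ∣ n)
    (D : Fin K → Finset (Fin n))
    (hcard : ∀ k, (D k).card = n / K)
    (X : Fin n → Ω → 𝒳) (Y : Fin n → Ω → 𝒴) (Xt : Fin N → Ω → 𝒳) (W : Fin K → Ω → 𝕎)
    (hX : ∀ i, Measurable (X i)) (hY : ∀ i, Measurable (Y i)) (hXt : ∀ i, Measurable (Xt i))
    (hW : ∀ k, Measurable (W k))
    (f : 𝕎 → 𝒳 → 𝒴)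
    (hlab : ∀ i, μ.map (fun ω => (X i ω, Y i ω)) = P)
    -- the model trained without fold k is independent of the fold-k labeled data:
    (hindep_lab : ∀ k, ∀ i ∈ D k,
      μ.map (fun ω => (W k ω, (X i ω, Y i ω))) = (μ.map (W k)).prod P)
    -- the models are independent of the unlabeled data:
    (hindep_unlab : ∀ k j,
      μ.map (fun ω => (W k ω, Xt j ω)) = (μ.map (W k)).prod (P.map Prod.fst))
    (ℓ : Θ → 𝒳 → 𝒴 → ℝ) (θ : Θ)
    (hint : Integrable (fun p : 𝒳 × 𝒴 => ℓ θ p.1 p.2) P)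
    (hintf : ∀ k, Integrable (fun q : 𝕎 × 𝒳 => ℓ θ q.2 (f q.1 q.2))
      ((μ.map (W k)).prod (P.map Prod.fst))) :
    ∫ ω, ((1 / ((K : ℝ) * N)) * ∑ k, ∑ j, ℓ θ (Xt j ω) (f (W k ω) (Xt j ω))
        - (1 / (n : ℝ)) * ∑ k, ∑ i ∈ D k, ℓ θ (X i ω) (f (W k ω) (X i ω))
        + (1 / (n : ℝ)) * ∑ i, ℓ θ (X i ω) (Y i ω)) ∂μ
      = ∫ p, ℓ θ p.1 p.2 ∂P := by
  set ν : Fin K → Measure (𝕎 × 𝒳) := fun k => (μ.map (W k)).prod (P.map Prod.fst)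
  set g : 𝕎 × 𝒳 → ℝ := fun q => ℓ θ q.2 (f q.1 q.2)
  have hunlab : ∀ k, ∀ j ∈ (univ : Finset (Fin N)),
      MeasurePreserving (fun ω => (W k ω, Xt j ω)) μ (ν k) :=
    fun k j _ => ⟨(hW k).prodMk (hXt j), hindep_unlab k j⟩
  have hfold : ∀ k, ∀ i ∈ D k, MeasurePreserving (fun ω => (W k ω, X i ω)) μ (ν k) :=
    fun k i hi => ((MeasurePreserving.id _).prod (measurable_fst.measurePreserving P)).comp
      ⟨(hW k).prodMk ((hX i).prodMk (hY i)), hindep_lab k i hi⟩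
  have hlabel : ∀ i ∈ (univ : Finset (Fin n)),
      MeasurePreserving (fun ω => (X i ω, Y i ω)) μ P :=
    fun i _ => ⟨(hX i).prodMk (hY i), hlab i⟩
  have hIA : Integrable (fun ω => (1 / ((K : ℝ) * N)) * ∑ k, ∑ j, g (W k ω, Xt j ω)) μ :=
    (MeasurePreserving.integrable_finsetSum_finsetSum_comp (fun k _ => hunlab k)
      (fun k _ => hintf k)).const_mul _
  have hIB : Integrable (fun ω => (1 / (n : ℝ)) * ∑ k, ∑ i ∈ D k, g (W k ω, X i ω)) μ :=
    (MeasurePreserving.integrable_finsetSum_finsetSum_comp (fun k _ => hfold k)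
      (fun k _ => hintf k)).const_mul _
  have hIC : Integrable (fun ω => (1 / (n : ℝ)) * ∑ i, ℓ θ (X i ω) (Y i ω)) μ :=
    (MeasurePreserving.integrable_finsetSum_comp hlabel hint).const_mul _
  -- both model terms have expectation `(1 / K) ∑ₖ ∫ g ∂ν k`
  have hmodel : ∫ ω, (1 / ((K : ℝ) * N)) * ∑ k, ∑ j, g (W k ω, Xt j ω) ∂μ
      = ∫ ω, (1 / (n : ℝ)) * ∑ k, ∑ i ∈ D k, g (W k ω, X i ω) ∂μ := by
    rw [integral_const_mul, integral_const_mul,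
      MeasurePreserving.integral_finsetSum_finsetSum_comp (T := fun k j ω => (W k ω, Xt j ω))
        (fun k _ => hunlab k) (fun k _ => hintf k),
      MeasurePreserving.integral_finsetSum_finsetSum_comp (T := fun k i ω => (W k ω, X i ω))
        (fun k _ => hfold k) (fun k _ => hintf k)]
    simp only [card_univ, Fintype.card_fin, hcard, Nat.cast_div hKn (Nat.cast_ne_zero.2 hK.ne'),
      nsmul_eq_mul, ← mul_sum]
    field_simp
  have hlabeled : ∫ ω, (1 / (n : ℝ)) * ∑ i, ℓ θ (X i ω) (Y i ω) ∂μ = ∫ p, ℓ θ p.1 p.2 ∂P := by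
    rw [integral_const_mul, MeasurePreserving.integral_finsetSum_comp
      (T := fun i ω => (X i ω, Y i ω)) hlabel hint]
    simp only [card_univ, Fintype.card_fin, nsmul_eq_mul]
    field_simp
  rw [integral_add (hIA.sub hIB : Integrable (fun ω => _ - _) μ) hIC, integral_sub hIA hIB,
    hmodel, hlabeled, sub_self, zero_add]

/-- The CPPI loss is an unbiased estimate of the population loss.
The model trained leaving out fold `D k` is `fun x => f (W k ω) x`, where `W k` is the
(random) training outcome, independent of the fold-`k` labeled data and of the unlabeled
data. -/
theorem cppi_unbiased
    {Ω 𝒳 𝒴 𝕎 Θ : Type*} [MeasurableSpace Ω] [MeasurableSpace 𝒳] [MeasurableSpace 𝒴]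
    [MeasurableSpace 𝕎]
    (μ : Measure Ω) [IsProbabilityMeasure μ]
    (P : Measure (𝒳 × 𝒴)) [IsProbabilityMeasure P]
    (n N K : ℕ) (hn : 0 < n) (hN : 0 < N) (hK : 0 < K) (hKn : K ∣ n)
    (D : Fin K → Finset (Fin n))
    (hdisj : ∀ k l, k ≠ l → Disjoint (D k) (D l))
    (hcover : ∀ i : Fin n, ∃ k, i ∈ D k)
    (hcard : ∀ k, (D k).card = n / K)
    (X : Fin n → Ω → 𝒳) (Y : Fin n → Ω → 𝒴) (Xt : Fin N → Ω → 𝒳) (W : Fin K → Ω → 𝕎)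
    (hX : ∀ i, Measurable (X i)) (hY : ∀ i, Measurable (Y i)) (hXt : ∀ i, Measurable (Xt i))
    (hW : ∀ k, Measurable (W k))
    (f : 𝕎 → 𝒳 → 𝒴) (hf : Measurable fun q : 𝕎 × 𝒳 => f q.1 q.2)
    (hlab : ∀ i, μ.map (fun ω => (X i ω, Y i ω)) = P)
    -- the model trained without fold k is independent of the fold-k labeled data:
    (hindep_lab : ∀ k, ∀ i ∈ D k,
      μ.map (fun ω => (W k ω, (X i ω, Y i ω))) = (μ.map (W k)).prod P)
    -- the models are independent of the unlabeled data:
    (hindep_unlab : ∀ k j,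
      μ.map (fun ω => (W k ω, Xt j ω)) = (μ.map (W k)).prod (P.map Prod.fst))
    (ℓ : Θ → 𝒳 → 𝒴 → ℝ) (θ : Θ)
    (hint : Integrable (fun p : 𝒳 × 𝒴 => ℓ θ p.1 p.2) P)
    (hintf : ∀ k, Integrable (fun q : 𝕎 × 𝒳 => ℓ θ q.2 (f q.1 q.2))
      ((μ.map (W k)).prod (P.map Prod.fst))) :
    ∫ ω, ((1 / ((K : ℝ) * N)) * ∑ k, ∑ j, ℓ θ (Xt j ω) (f (W k ω) (Xt j ω))
        - (1 / (n : ℝ)) * ∑ k, ∑ i ∈ D k, ℓ θ (X i ω) (f (W k ω) (X i ω))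
        + (1 / (n : ℝ)) * ∑ i, ℓ θ (X i ω) (Y i ω)) ∂μ
      = ∫ p, ℓ θ p.1 p.2 ∂P :=
  cppi_unbiased_general μ P n N K hn hN hK hKn D hcard X Y Xt W hX hY hXt hW f hlab hindep_lab
    hindep_unlab ℓ θ hint hintf
end

section
/- For every λ ∈ [0,1], the tuned CPPI loss L^CP_λ(θ) = (1/n)∑_{i=1}^n ℓ_θ(X_i,Y_i) + λ[(1/(KN))∑_{k=1}^K ∑_{i=1}^N ℓ_θ(X̃_i, f^{(k)}(X̃_i)) − (1/n)∑_{k=1}^K ∑_{i∈D^{(k)}} ℓ_θ(X_i, f^{(k)}(X_i))] satisfies E[L^CP_λ(θ)] = L(θ) for every θ. -/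
/-!
Every summand of the tuned loss is a fixed function of a pair whose law is known: a labeled
pair `(X i, Y i)` has law `P`, and, by the independence of the fold-`k` model from the fold-`k`
labeled data and from the unlabeled data, both `(W k, X i)` for `i ∈ D k` and `(W k, Xt j)` have
law `(law of W k) ⊗ P_X`. Hence the two correction terms have the same expectation
`(1/K) ∑ₖ E[ℓ(x, f (W k) x)]` (each fold has `n/K` points) and cancel for every `λ`.
-/

open MeasureTheory ProbabilityTheory

namespace ProbabilityTheory

variable {Ω 𝓧 : Type*} {mΩ : MeasurableSpace Ω} {m𝓧 : MeasurableSpace 𝓧} {P : Measure Ω}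

lemma HasLaw.integrable_comp {E : Type*} [NormedAddCommGroup E] {X : Ω → 𝓧} {μ : Measure 𝓧}
    (hX : HasLaw X μ P) {f : 𝓧 → E} (hf : Integrable f μ) : Integrable (fun ω ↦ f (X ω)) P :=
  (hX.map_eq ▸ hf).comp_aemeasurable hX.aemeasurable

lemma HasLaw.prodMk_map_right {𝓨 𝓩 : Type*} {m𝓨 : MeasurableSpace 𝓨} {m𝓩 : MeasurableSpace 𝓩}
    {A : Ω → 𝓧} {B : Ω → 𝓨} {μ : Measure 𝓧} {ν : Measure 𝓨} [SFinite μ] [SFinite ν]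
    (hAB : HasLaw (fun ω ↦ (A ω, B ω)) (μ.prod ν) P) {g : 𝓨 → 𝓩} (hg : Measurable g) :
    HasLaw (fun ω ↦ (A ω, g (B ω))) (μ.prod (ν.map g)) P := by
  have hmap : HasLaw (Prod.map id g) (μ.prod (ν.map g)) (μ.prod ν) :=
    ⟨(measurable_id.prodMap hg).aemeasurable, by
      rw [← Measure.map_prod_map _ _ measurable_id hg, Measure.map_id]⟩
  exact hmap.fun_comp hAB

section SumsOfIdenticallyDistributed

variable {ι κ E : Type*} [NormedAddCommGroup E] {F : 𝓧 → E}

lemma integrable_finset_sum_comp_of_hasLaw {s : Finset ι} {X : ι → Ω → 𝓧} {μ : Measure 𝓧}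
    (hX : ∀ i ∈ s, HasLaw (X i) μ P) (hF : Integrable F μ) :
    Integrable (fun ω ↦ ∑ i ∈ s, F (X i ω)) P :=
  integrable_finsetSum s fun i hi ↦ (hX i hi).integrable_comp hF

lemma integral_finset_sum_comp_of_hasLaw [NormedSpace ℝ E] {s : Finset ι} {X : ι → Ω → 𝓧}
    {μ : Measure 𝓧}
    (hX : ∀ i ∈ s, HasLaw (X i) μ P) (hF : Integrable F μ) :
    ∫ ω, ∑ i ∈ s, F (X i ω) ∂P = s.card • ∫ x, F x ∂μ := by
  have h_each (i) (hi : i ∈ s) : ∫ ω, F (X i ω) ∂P = ∫ x, F x ∂μ :=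
    (hX i hi).integral_comp hF.aestronglyMeasurable
  rw [integral_finsetSum s fun i hi ↦ (hX i hi).integrable_comp hF, Finset.sum_congr rfl h_each,
    Finset.sum_const]

variable {s : Finset κ} {t : κ → Finset ι} {X : κ → ι → Ω → 𝓧} {μ : κ → Measure 𝓧}

lemma integrable_finset_sum_sum_comp_of_hasLaw (hX : ∀ k ∈ s, ∀ i ∈ t k, HasLaw (X k i) (μ k) P)
    (hF : ∀ k ∈ s, Integrable F (μ k)) :
    Integrable (fun ω ↦ ∑ k ∈ s, ∑ i ∈ t k, F (X k i ω)) P :=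
  integrable_finsetSum s fun k hk ↦ integrable_finset_sum_comp_of_hasLaw (hX k hk) (hF k hk)

lemma integral_finset_sum_sum_comp_of_hasLaw [NormedSpace ℝ E]
    (hX : ∀ k ∈ s, ∀ i ∈ t k, HasLaw (X k i) (μ k) P)
    (hF : ∀ k ∈ s, Integrable F (μ k)) :
    ∫ ω, ∑ k ∈ s, ∑ i ∈ t k, F (X k i ω) ∂P = ∑ k ∈ s, (t k).card • ∫ x, F x ∂μ k := by
  rw [integral_finsetSum s fun k hk ↦ integrable_finset_sum_comp_of_hasLaw (hX k hk) (hF k hk)]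
  exact Finset.sum_congr rfl fun k hk ↦ integral_finset_sum_comp_of_hasLaw (hX k hk) (hF k hk)

end SumsOfIdenticallyDistributed

end ProbabilityTheory

/-- The model trained leaving out fold `D k` is `f (W k ω)`, where `W k` is the random training
outcome. -/
theorem tuned_cppi_unbiased_general
    {Ω 𝒳 𝒴 𝕎 Θ : Type*} [MeasurableSpace Ω] [MeasurableSpace 𝒳] [MeasurableSpace 𝒴]
    [MeasurableSpace 𝕎]
    (μ : Measure Ω) [IsProbabilityMeasure μ]
    (P : Measure (𝒳 × 𝒴)) [IsProbabilityMeasure P]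
    (n N K : ℕ) (hn : 0 < n) (hN : 0 < N) (hK : 0 < K) (hKn : K ∣ n)
    (D : Fin K → Finset (Fin n))
    (hcard : ∀ k, (D k).card = n / K)
    (X : Fin n → Ω → 𝒳) (Y : Fin n → Ω → 𝒴) (Xt : Fin N → Ω → 𝒳) (W : Fin K → Ω → 𝕎)
    (hX : ∀ i, Measurable (X i)) (hY : ∀ i, Measurable (Y i)) (hXt : ∀ i, Measurable (Xt i))
    (hW : ∀ k, Measurable (W k))
    (f : 𝕎 → 𝒳 → 𝒴)
    (hlab : ∀ i, μ.map (fun ω => (X i ω, Y i ω)) = P)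
    -- the model trained without fold k is independent of the fold-k labeled data:
    (hindep_lab : ∀ k, ∀ i ∈ D k,
      μ.map (fun ω => (W k ω, (X i ω, Y i ω))) = (μ.map (W k)).prod P)
    -- the models are independent of the unlabeled data:
    (hindep_unlab : ∀ k j,
      μ.map (fun ω => (W k ω, Xt j ω)) = (μ.map (W k)).prod (P.map Prod.fst))
    (ℓ : Θ → 𝒳 → 𝒴 → ℝ) (θ : Θ)
    (hint : Integrable (fun p : 𝒳 × 𝒴 => ℓ θ p.1 p.2) P)
    (hintf : ∀ k, Integrable (fun q : 𝕎 × 𝒳 => ℓ θ q.2 (f q.1 q.2))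
      ((μ.map (W k)).prod (P.map Prod.fst)))
    (lam : ℝ) :
    ∫ ω, ((1 / (n : ℝ)) * ∑ i, ℓ θ (X i ω) (Y i ω)
        + lam * ((1 / ((K : ℝ) * N)) * ∑ k, ∑ j, ℓ θ (Xt j ω) (f (W k ω) (Xt j ω))
          - (1 / (n : ℝ)) * ∑ k, ∑ i ∈ D k, ℓ θ (X i ω) (f (W k ω) (X i ω)))) ∂μ
      = ∫ p, ℓ θ p.1 p.2 ∂P := by
  have hlab_law : ∀ i ∈ Finset.univ, HasLaw (fun ω ↦ (X i ω, Y i ω)) P μ :=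
    fun i _ ↦ ⟨((hX i).prodMk (hY i)).aemeasurable, hlab i⟩
  have hunlab_law : ∀ k ∈ Finset.univ, ∀ j ∈ Finset.univ,
      HasLaw (fun ω ↦ (W k ω, Xt j ω)) ((μ.map (W k)).prod (P.map Prod.fst)) μ :=
    fun k _ j _ ↦ ⟨((hW k).prodMk (hXt j)).aemeasurable, hindep_unlab k j⟩
  have hfold_law : ∀ k ∈ Finset.univ, ∀ i ∈ D k,
      HasLaw (fun ω ↦ (W k ω, X i ω)) ((μ.map (W k)).prod (P.map Prod.fst)) μ :=
    fun k _ i hi ↦ HasLaw.prodMk_map_right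
      ⟨((hW k).prodMk ((hX i).prodMk (hY i))).aemeasurable, hindep_lab k i hi⟩ measurable_fst
  have hA_int := integrable_finset_sum_comp_of_hasLaw hlab_law hint
  have hB_int := integrable_finset_sum_sum_comp_of_hasLaw hunlab_law fun k _ ↦ hintf k
  have hC_int := integrable_finset_sum_sum_comp_of_hasLaw hfold_law fun k _ ↦ hintf k
  have hA := integral_finset_sum_comp_of_hasLaw hlab_law hint
  have hB := integral_finset_sum_sum_comp_of_hasLaw hunlab_law fun k _ ↦ hintf k
  have hC := integral_finset_sum_sum_comp_of_hasLaw hfold_law fun k _ ↦ hintf k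
  simp only [Finset.card_univ, Fintype.card_fin, hcard, nsmul_eq_mul,
    Nat.cast_div hKn (by positivity : (K : ℝ) ≠ 0)] at hA_int hB_int hC_int hA hB hC
  rw [integral_add, integral_const_mul, integral_const_mul, integral_sub, integral_const_mul,
    integral_const_mul, hA, hB, hC, ← Finset.mul_sum, ← Finset.mul_sum]
  · field_simp
    ring
  all_goals fun_prop

/-- For every λ ∈ [0,1], the tuned CPPI loss is unbiased for the
population loss.
The model trained leaving out fold `D k` is `fun x => f (W k ω) x`, where `W k` is the
(random) training outcome, independent of the fold-`k` labeled data and of the unlabeled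
data. -/
theorem tuned_cppi_unbiased
    {Ω 𝒳 𝒴 𝕎 Θ : Type*} [MeasurableSpace Ω] [MeasurableSpace 𝒳] [MeasurableSpace 𝒴]
    [MeasurableSpace 𝕎]
    (μ : Measure Ω) [IsProbabilityMeasure μ]
    (P : Measure (𝒳 × 𝒴)) [IsProbabilityMeasure P]
    (n N K : ℕ) (hn : 0 < n) (hN : 0 < N) (hK : 0 < K) (hKn : K ∣ n)
    (D : Fin K → Finset (Fin n))
    (hdisj : ∀ k l, k ≠ l → Disjoint (D k) (D l))
    (hcover : ∀ i : Fin n, ∃ k, i ∈ D k)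
    (hcard : ∀ k, (D k).card = n / K)
    (X : Fin n → Ω → 𝒳) (Y : Fin n → Ω → 𝒴) (Xt : Fin N → Ω → 𝒳) (W : Fin K → Ω → 𝕎)
    (hX : ∀ i, Measurable (X i)) (hY : ∀ i, Measurable (Y i)) (hXt : ∀ i, Measurable (Xt i))
    (hW : ∀ k, Measurable (W k))
    (f : 𝕎 → 𝒳 → 𝒴) (hf : Measurable fun q : 𝕎 × 𝒳 => f q.1 q.2)
    (hlab : ∀ i, μ.map (fun ω => (X i ω, Y i ω)) = P)
    -- the model trained without fold k is independent of the fold-k labeled data: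
    (hindep_lab : ∀ k, ∀ i ∈ D k,
      μ.map (fun ω => (W k ω, (X i ω, Y i ω))) = (μ.map (W k)).prod P)
    -- the models are independent of the unlabeled data:
    (hindep_unlab : ∀ k j,
      μ.map (fun ω => (W k ω, Xt j ω)) = (μ.map (W k)).prod (P.map Prod.fst))
    (ℓ : Θ → 𝒳 → 𝒴 → ℝ) (θ : Θ)
    (hint : Integrable (fun p : 𝒳 × 𝒴 => ℓ θ p.1 p.2) P)
    (hintf : ∀ k, Integrable (fun q : 𝕎 × 𝒳 => ℓ θ q.2 (f q.1 q.2))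
      ((μ.map (W k)).prod (P.map Prod.fst)))
    (lam : ℝ) (hlam : lam ∈ Set.Icc (0 : ℝ) 1) :
    ∫ ω, ((1 / (n : ℝ)) * ∑ i, ℓ θ (X i ω) (Y i ω)
        + lam * ((1 / ((K : ℝ) * N)) * ∑ k, ∑ j, ℓ θ (Xt j ω) (f (W k ω) (Xt j ω))
          - (1 / (n : ℝ)) * ∑ k, ∑ i ∈ D k, ℓ θ (X i ω) (f (W k ω) (X i ω)))) ∂μ
      = ∫ p, ℓ θ p.1 p.2 ∂P :=
  tuned_cppi_unbiased_general μ P n N K hn hN hK hKn D hcard X Y Xt W hX hY hXt hW f hlab hindep_lab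
    hindep_unlab ℓ θ hint hintf lam
end

section
/- The map λ ↦ tr(Σ_λ), where Σ_λ = H^{-1}(r·V^λ_{f̄} + V^λ_Δ)H^{-1} with V^λ_{f̄} = λ²·Var(∇ℓ^{f̄}) and V^λ_Δ = Var(∇ℓ − λ∇ℓ^{f̄}), is a quadratic polynomial in λ with leading coefficient (1+r)·tr(H^{-1}Var(∇ℓ^{f̄})H^{-1}) ≥ 0, and if tr(H^{-1}Var(∇ℓ^{f̄})H^{-1}) > 0 its unique minimizer is λ* = tr(H^{-1}(Cov(∇ℓ, ∇ℓ^{f̄}) + Cov(∇ℓ^{f̄}, ∇ℓ))H^{-1}) / (2(1+r)·tr(H^{-1}Var(∇ℓ^{f̄})H^{-1})). -/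
open MeasureTheory ProbabilityTheory Matrix

/-!
Covariance is bilinear, so `Var(∇ℓ - λ∇ℓ^f̄)` and hence `tr Σ_λ` are quadratic in `λ`. The
leading coefficient is the trace of `H⁻¹ V H⁻¹ = (H⁻¹)ᵀ V H⁻¹` with `V` a covariance matrix, which
is positive semidefinite, so the trace is nonnegative; completing the square locates the vertex.
-/

namespace ProbabilityTheory

variable {Ω ι κ : Type*} [MeasurableSpace Ω] {μ : Measure Ω}

noncomputable def crossCovMatrix (μ : Measure Ω) (U : Ω → ι → ℝ) (V : Ω → κ → ℝ) :
    Matrix ι κ ℝ :=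
  Matrix.of fun i j => cov[fun ω => U ω i, fun ω => V ω j; μ]

lemma crossCovMatrix_sub_smul_self [IsFiniteMeasure μ] {X Y : Ω → ι → ℝ}
    (hX : ∀ i, MemLp (fun ω => X ω i) 2 μ) (hY : ∀ i, MemLp (fun ω => Y ω i) 2 μ) (c : ℝ) :
    crossCovMatrix μ (fun ω i => X ω i - c * Y ω i) (fun ω i => X ω i - c * Y ω i)
      = crossCovMatrix μ X X - c • (crossCovMatrix μ X Y + crossCovMatrix μ Y X)
        + c ^ 2 • crossCovMatrix μ Y Y := by
  ext i j
  simp only [crossCovMatrix, of_apply, Matrix.add_apply, Matrix.sub_apply, Matrix.smul_apply,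
    smul_eq_mul]
  rw [covariance_fun_sub_fun_sub (hX i) ((hY i).const_mul c) (hX j) ((hY j).const_mul c),
    covariance_const_mul_left, covariance_const_mul_right, covariance_const_mul_left,
    covariance_const_mul_right]
  ring

lemma covariance_self_nonneg (X : Ω → ℝ) : 0 ≤ cov[X, X; μ] :=
  integral_nonneg fun _ => mul_self_nonneg _

lemma posSemidef_crossCovMatrix_self [IsFiniteMeasure μ] [Fintype ι] {X : Ω → ι → ℝ}
    (hX : ∀ i, MemLp (fun ω => X ω i) 2 μ) : (crossCovMatrix μ X X).PosSemidef := by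
  refine PosSemidef.of_dotProduct_mulVec_nonneg ?_ fun x => ?_
  · ext i j
    exact covariance_comm _ _
  · have hxX : ∀ i, MemLp (fun ω => x i * X ω i) 2 μ := fun i => (hX i).const_mul (x i)
    have hquad : star x ⬝ᵥ (crossCovMatrix μ X X *ᵥ x)
        = cov[fun ω => ∑ i, x i * X ω i, fun ω => ∑ j, x j * X ω j; μ] := by
      rw [covariance_fun_sum_fun_sum hxX hxX]
      simp only [dotProduct, mulVec, crossCovMatrix, of_apply, star_trivial, Finset.mul_sum,
        covariance_const_mul_left, covariance_const_mul_right]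
      refine Finset.sum_congr rfl fun i _ => Finset.sum_congr rfl fun j _ => ?_
      ring
    exact hquad ▸ covariance_self_nonneg _

end ProbabilityTheory

lemma Matrix.trace_mul_mul_nonneg_of_isSymm {n : Type*} [Fintype n] {M C : Matrix n n ℝ}
    (hC : C.PosSemidef) (hM : M.IsSymm) : 0 ≤ (M * C * M).trace := by
  simpa only [conjTranspose_eq_transpose_of_trivial, hM.eq] using
    (hC.conjTranspose_mul_mul_same M).trace_nonneg

lemma quadratic_lt_of_ne_vertex {a b c v x : ℝ} (ha : 0 < a) (hv : b = -(2 * a * v))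
    (hx : x ≠ v) : a * v ^ 2 + b * v + c < a * x ^ 2 + b * x + c := by
  subst hv
  linear_combination mul_pos ha (sq_pos_of_ne_zero (sub_ne_zero.mpr hx))

theorem tuned_cppi_trace_quadratic_general
    {Ω : Type*} [MeasurableSpace Ω] (μ : Measure Ω) [IsProbabilityMeasure μ]
    (d : ℕ) (G Gf : Ω → Fin d → ℝ)
    (hG : ∀ i, MemLp (fun ω => G ω i) 2 μ) (hGf : ∀ i, MemLp (fun ω => Gf ω i) 2 μ)
    (H : Matrix (Fin d) (Fin d) ℝ) (hHsym : H.IsSymm)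
    (r : ℝ) (hr : 0 < r)
    (Cov : (Ω → Fin d → ℝ) → (Ω → Fin d → ℝ) → Matrix (Fin d) (Fin d) ℝ)
    (hCov : ∀ U V, Cov U V = Matrix.of fun i j =>
      ∫ ω, (U ω i - ∫ ω', U ω' i ∂μ) * (V ω j - ∫ ω', V ω' j ∂μ) ∂μ)
    (T : ℝ → ℝ)
    (hT : ∀ lam, T lam = Matrix.trace (H⁻¹
      * (r • (lam ^ 2 • Cov Gf Gf)
        + Cov (fun ω i => G ω i - lam * Gf ω i) (fun ω i => G ω i - lam * Gf ω i))
      * H⁻¹))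
    (A : ℝ) (hA : A = Matrix.trace (H⁻¹ * Cov Gf Gf * H⁻¹))
    (lamStar : ℝ)
    (hls : lamStar = Matrix.trace (H⁻¹ * (Cov G Gf + Cov Gf G) * H⁻¹)
      / (2 * (1 + r) * A)) :
    (∃ b c : ℝ, ∀ lam, T lam = (1 + r) * A * lam ^ 2 + b * lam + c) ∧
    0 ≤ A ∧
    (0 < A → ∀ lam, lam ≠ lamStar → T lamStar < T lam) := by
  obtain rfl : Cov = crossCovMatrix μ := funext₂ hCov
  set B := (H⁻¹ * (crossCovMatrix μ G Gf + crossCovMatrix μ Gf G) * H⁻¹).trace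
  have hT_quad : ∀ lam, T lam = (1 + r) * A * lam ^ 2 + -B * lam
      + (H⁻¹ * crossCovMatrix μ G G * H⁻¹).trace := by
    intro lam
    rw [hT, crossCovMatrix_sub_smul_self hG hGf, hA]
    simp only [Matrix.mul_add, Matrix.add_mul, Matrix.mul_sub, Matrix.sub_mul, Matrix.mul_smul,
      Matrix.smul_mul, trace_add, trace_sub, trace_smul, smul_eq_mul, B]
    ring
  refine ⟨⟨_, _, hT_quad⟩, hA ▸ trace_mul_mul_nonneg_of_isSymm
    (posSemidef_crossCovMatrix_self hGf) hHsym.inv, fun hA_pos lam hne => ?_⟩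
  rw [hT_quad, hT_quad]
  refine quadratic_lt_of_ne_vertex (by positivity) ?_ hne
  rw [hls]
  field_simp

/-- λ ↦ tr(Σ_λ) with Σ_λ = H⁻¹(r·λ²·Var(∇ℓ^f̄) + Var(∇ℓ − λ∇ℓ^f̄))H⁻¹ is a
quadratic polynomial in λ with nonnegative leading coefficient
(1+r)·tr(H⁻¹Var(∇ℓ^f̄)H⁻¹), and if the latter trace is positive, its unique minimizer is
λ* = tr(H⁻¹(Cov(∇ℓ,∇ℓ^f̄) + Cov(∇ℓ^f̄,∇ℓ))H⁻¹) / (2(1+r)·tr(H⁻¹Var(∇ℓ^f̄)H⁻¹)).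
Here `G = ∇ℓ` and `Gf = ∇ℓ^f̄`. -/
theorem tuned_cppi_trace_quadratic
    {Ω : Type*} [MeasurableSpace Ω] (μ : Measure Ω) [IsProbabilityMeasure μ]
    (d : ℕ) (G Gf : Ω → Fin d → ℝ)
    (hG : ∀ i, MemLp (fun ω => G ω i) 2 μ) (hGf : ∀ i, MemLp (fun ω => Gf ω i) 2 μ)
    (H : Matrix (Fin d) (Fin d) ℝ) (hHsym : H.IsSymm) (hHinv : IsUnit H.det)
    (r : ℝ) (hr : 0 < r)
    (Cov : (Ω → Fin d → ℝ) → (Ω → Fin d → ℝ) → Matrix (Fin d) (Fin d) ℝ)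
    (hCov : ∀ U V, Cov U V = Matrix.of fun i j =>
      ∫ ω, (U ω i - ∫ ω', U ω' i ∂μ) * (V ω j - ∫ ω', V ω' j ∂μ) ∂μ)
    (T : ℝ → ℝ)
    (hT : ∀ lam, T lam = Matrix.trace (H⁻¹
      * (r • (lam ^ 2 • Cov Gf Gf)
        + Cov (fun ω i => G ω i - lam * Gf ω i) (fun ω i => G ω i - lam * Gf ω i))
      * H⁻¹))
    (A : ℝ) (hA : A = Matrix.trace (H⁻¹ * Cov Gf Gf * H⁻¹))
    (lamStar : ℝ)
    (hls : lamStar = Matrix.trace (H⁻¹ * (Cov G Gf + Cov Gf G) * H⁻¹)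
      / (2 * (1 + r) * A)) :
    (∃ b c : ℝ, ∀ lam, T lam = (1 + r) * A * lam ^ 2 + b * lam + c) ∧
    0 ≤ A ∧
    (0 < A → ∀ lam, lam ≠ lamStar → T lamStar < T lam) :=
  tuned_cppi_trace_quadratic_general μ d G Gf hG hGf H hHsym r hr Cov hCov T hT A hA lamStar hls
end

section
/- At the optimal tuning parameter λ* = tr(H^{-1}(Cov(∇ℓ,∇ℓ^{f̄}) + Cov(∇ℓ^{f̄},∇ℓ))H^{-1}) / (2(1+r)·tr(H^{-1}Var(∇ℓ^{f̄})H^{-1})), the minimized asymptotic variance satisfies tr(Σ_{λ*}) ≤ tr(Σ_0) = tr(H^{-1}Var(∇ℓ)H^{-1}); that is, optimally tuned (C)PPI never has larger asymptotic variance than ERM. -/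
open MeasureTheory ProbabilityTheory Matrix

/-! In the scalar `λ`, the trace `tr Σ_λ = (1 + r) A λ² - B λ + C` is a convex quadratic whose
value at `λ = 0` is the ERM variance `C`, and `λ*` is its vertex, where it equals
`C - B² / (4 (1 + r) A) ≤ C`. The quadratic form comes from bilinearity of the covariance. -/

lemma quadratic_at_vertex_le {a : ℝ} (ha : 0 < a) (b c : ℝ) :
    a * (b / (2 * a)) ^ 2 - b * (b / (2 * a)) + c ≤ c := by
  have hvertex : a * (b / (2 * a)) ^ 2 - b * (b / (2 * a)) + c = c - b ^ 2 / (4 * a) := by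
    field_simp
    ring
  rw [hvertex]
  linarith [show 0 ≤ b ^ 2 / (4 * a) by positivity]

section Covariance

variable {Ω : Type*} [MeasurableSpace Ω] {μ : Measure Ω}

lemma covariance_fun_sub_const_mul [IsFiniteMeasure μ] {X Y Z W : Ω → ℝ}
    (hX : MemLp X 2 μ) (hY : MemLp Y 2 μ) (hZ : MemLp Z 2 μ) (hW : MemLp W 2 μ) (c : ℝ) :
    cov[fun ω ↦ X ω - c * Y ω, fun ω ↦ Z ω - c * W ω; μ]
      = cov[X, Z; μ] - c * (cov[X, W; μ] + cov[Y, Z; μ]) + c ^ 2 * cov[Y, W; μ] := by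
  rw [covariance_fun_sub_fun_sub hX (hY.const_mul c) hZ (hW.const_mul c),
    covariance_const_mul_right, covariance_const_mul_left, covariance_const_mul_left,
    covariance_const_mul_right]
  ring

variable {ι : Type*}

noncomputable def covMatrix (μ : Measure Ω) (U V : Ω → ι → ℝ) : Matrix ι ι ℝ :=
  Matrix.of fun i j ↦ cov[fun ω ↦ U ω i, fun ω ↦ V ω j; μ]

lemma covMatrix_sub_smul_self [IsFiniteMeasure μ] {U V : Ω → ι → ℝ}
    (hU : ∀ i, MemLp (fun ω ↦ U ω i) 2 μ) (hV : ∀ i, MemLp (fun ω ↦ V ω i) 2 μ) (c : ℝ) :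
    covMatrix μ (fun ω i ↦ U ω i - c * V ω i) (fun ω i ↦ U ω i - c * V ω i)
      = covMatrix μ U U - c • (covMatrix μ U V + covMatrix μ V U)
        + c ^ 2 • covMatrix μ V V := by
  ext i j
  simp only [covMatrix, Matrix.add_apply, Matrix.sub_apply, Matrix.smul_apply, Matrix.of_apply,
    smul_eq_mul]
  exact covariance_fun_sub_const_mul (hU i) (hV i) (hU j) (hV j) c

end Covariance

lemma trace_sandwich_sub_smul_add_smul {ι : Type*} [Fintype ι] (K P Q R : Matrix ι ι ℝ)
    (s t : ℝ) :
    trace (K * (P - s • Q + t • R) * K)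
      = trace (K * P * K) - s * trace (K * Q * K) + t * trace (K * R * K) := by
  simp only [Matrix.mul_add, Matrix.add_mul, Matrix.mul_sub, Matrix.sub_mul, Matrix.mul_smul,
    Matrix.smul_mul, Matrix.trace_add, Matrix.trace_sub, Matrix.trace_smul, smul_eq_mul]

theorem tuned_cppi_no_worse_than_erm_general
    {Ω : Type*} [MeasurableSpace Ω] (μ : Measure Ω) [IsProbabilityMeasure μ]
    (d : ℕ) (G Gf : Ω → Fin d → ℝ)
    (hG : ∀ i, MemLp (fun ω => G ω i) 2 μ) (hGf : ∀ i, MemLp (fun ω => Gf ω i) 2 μ)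
    (H : Matrix (Fin d) (Fin d) ℝ)
    (r : ℝ) (hr : 0 < r)
    (Cov : (Ω → Fin d → ℝ) → (Ω → Fin d → ℝ) → Matrix (Fin d) (Fin d) ℝ)
    (hCov : ∀ U V, Cov U V = Matrix.of fun i j =>
      ∫ ω, (U ω i - ∫ ω', U ω' i ∂μ) * (V ω j - ∫ ω', V ω' j ∂μ) ∂μ)
    (T : ℝ → ℝ)
    (hT : ∀ lam, T lam = Matrix.trace (H⁻¹
      * (r • (lam ^ 2 • Cov Gf Gf)
        + Cov (fun ω i => G ω i - lam * Gf ω i) (fun ω i => G ω i - lam * Gf ω i))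
      * H⁻¹))
    (A : ℝ) (hA : A = Matrix.trace (H⁻¹ * Cov Gf Gf * H⁻¹)) (hApos : 0 < A)
    (lamStar : ℝ)
    (hls : lamStar = Matrix.trace (H⁻¹ * (Cov G Gf + Cov Gf G) * H⁻¹)
      / (2 * (1 + r) * A)) :
    T lamStar ≤ T 0 ∧ T 0 = Matrix.trace (H⁻¹ * Cov G G * H⁻¹) := by
  obtain rfl : Cov = covMatrix μ := funext₂ hCov
  set B := trace (H⁻¹ * (covMatrix μ G Gf + covMatrix μ Gf G) * H⁻¹)
  set C := trace (H⁻¹ * covMatrix μ G G * H⁻¹)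
  have hT_quadratic : ∀ lam, T lam = (1 + r) * A * lam ^ 2 - B * lam + C := by
    intro lam
    have hSigma : r • (lam ^ 2 • covMatrix μ Gf Gf)
        + covMatrix μ (fun ω i ↦ G ω i - lam * Gf ω i) (fun ω i ↦ G ω i - lam * Gf ω i)
        = covMatrix μ G G - lam • (covMatrix μ G Gf + covMatrix μ Gf G)
          + ((1 + r) * lam ^ 2) • covMatrix μ Gf Gf := by
      rw [covMatrix_sub_smul_self hG hGf, smul_smul, add_mul, one_mul, add_smul]
      abel
    rw [hT, hSigma, trace_sandwich_sub_smul_add_smul, hA]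
    ring
  have hT_zero : T 0 = C := by rw [hT_quadratic]; ring
  refine ⟨?_, hT_zero⟩
  rw [hT_zero, hT_quadratic, hls, mul_assoc 2]
  exact quadratic_at_vertex_le (by positivity) B C

/-- At the optimal tuning parameter λ*, the minimized asymptotic variance
satisfies tr(Σ_{λ*}) ≤ tr(Σ_0) = tr(H⁻¹Var(∇ℓ)H⁻¹): optimally tuned (C)PPI never has
larger asymptotic variance than ERM. Here `G = ∇ℓ` and `Gf = ∇ℓ^f̄`. -/
theorem tuned_cppi_no_worse_than_erm
    {Ω : Type*} [MeasurableSpace Ω] (μ : Measure Ω) [IsProbabilityMeasure μ]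
    (d : ℕ) (G Gf : Ω → Fin d → ℝ)
    (hG : ∀ i, MemLp (fun ω => G ω i) 2 μ) (hGf : ∀ i, MemLp (fun ω => Gf ω i) 2 μ)
    (H : Matrix (Fin d) (Fin d) ℝ) (hHsym : H.IsSymm) (hHinv : IsUnit H.det)
    (r : ℝ) (hr : 0 < r)
    (Cov : (Ω → Fin d → ℝ) → (Ω → Fin d → ℝ) → Matrix (Fin d) (Fin d) ℝ)
    (hCov : ∀ U V, Cov U V = Matrix.of fun i j =>
      ∫ ω, (U ω i - ∫ ω', U ω' i ∂μ) * (V ω j - ∫ ω', V ω' j ∂μ) ∂μ)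
    (T : ℝ → ℝ)
    (hT : ∀ lam, T lam = Matrix.trace (H⁻¹
      * (r • (lam ^ 2 • Cov Gf Gf)
        + Cov (fun ω i => G ω i - lam * Gf ω i) (fun ω i => G ω i - lam * Gf ω i))
      * H⁻¹))
    (A : ℝ) (hA : A = Matrix.trace (H⁻¹ * Cov Gf Gf * H⁻¹)) (hApos : 0 < A)
    (lamStar : ℝ)
    (hls : lamStar = Matrix.trace (H⁻¹ * (Cov G Gf + Cov Gf G) * H⁻¹)
      / (2 * (1 + r) * A)) :
    T lamStar ≤ T 0 ∧ T 0 = Matrix.trace (H⁻¹ * Cov G G * H⁻¹) :=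
  tuned_cppi_no_worse_than_erm_general μ d G Gf hG hGf H r hr Cov hCov T hT A hA hApos lamStar hls
end
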